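/- For any Boolean function f : {-1,1}^n → {0,1} with E f = a, one has W_1[f] ≤ a − a². Consequently, for balanced f (a = 1/2) with β = |f̂_{{1}}|, W_1[f] ≤ β² + W^{(n−1)}(1/2 − β). -/

import Mathlib

open Finset

noncomputable def sgn (b : Bool) : ℝ := if b then 1 else -1

noncomputable def bexp (n : ℕ) (g : (Fin n → Bool) → ℝ) : ℝ :=
  (∑ x : Fin n → Bool, g x) / 2 ^ n

noncomputable def fcoef (n : ℕ) (f : (Fin n → Bool) → ℝ) (S : Finset (Fin n)) : ℝ :=
  bexp n (fun x => f x * ∏ i ∈ S, sgn (x i))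

noncomputable def Wone (n : ℕ) (f : (Fin n → Bool) → ℝ) : ℝ :=
  ∑ i : Fin n, (fcoef n f {i}) ^ 2

noncomputable def Wmax (m : ℕ) (t : ℝ) : ℝ :=
  sSup {w | ∃ g : (Fin m → Bool) → ℝ,
    (∀ x, g x = 0 ∨ g x = 1) ∧ bexp m g = t ∧ w = Wone m g}

lemma sgn_sq (b : Bool) : sgn b * sgn b = 1 := by
  cases b <;> simp [sgn]

lemma chi_sum (n : ℕ) (S : Finset (Fin n)) (hS : S ≠ ∅) :
    ∑ x : Fin n → Bool, ∏ i ∈ S, sgn (x i) = 0 := by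
  have key : ∀ x : Fin n → Bool, ∏ i ∈ S, sgn (x i)
      = ∏ i : Fin n, (if i ∈ S then sgn (x i) else 1) := by
    intro x
    rw [Finset.prod_ite_mem, Finset.univ_inter]
  simp_rw [key]
  rw [← Fintype.prod_sum (fun i b => if i ∈ S then sgn b else 1)]
  obtain ⟨j, hj⟩ := Finset.nonempty_iff_ne_empty.2 hS
  apply Finset.prod_eq_zero (Finset.mem_univ j)
  simp [hj, sgn]

lemma card_pi (n : ℕ) : (Fintype.card (Fin n → Bool) : ℝ) = 2 ^ n := by
  simp [Fintype.card_fun]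

lemma sum_sgn (n : ℕ) (i : Fin n) : ∑ x : Fin n → Bool, sgn (x i) = 0 := by
  have := chi_sum n {i} (by simp)
  simpa using this

lemma sum_sgn_mul (n : ℕ) (i j : Fin n) :
    ∑ x : Fin n → Bool, sgn (x i) * sgn (x j) = if i = j then 2 ^ n else 0 := by
  rcases eq_or_ne i j with rfl | hij
  · simp only [if_pos rfl, sgn_sq]
    rw [Finset.sum_const, nsmul_eq_mul, mul_one, ← card_pi n]
    simp
  · rw [if_neg hij]
    have := chi_sum n {i, j} (by simp)
    simpa [Finset.prod_pair hij] using this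

lemma bessel (n : ℕ) (f : (Fin n → Bool) → ℝ) (hf : ∀ x, f x = 0 ∨ f x = 1) :
    (∑ i : Fin n, (fcoef n f {i}) ^ 2) ≤ bexp n f - (bexp n f) ^ 2 := by
  set a := bexp n f with ha
  set c : Fin n → ℝ := fun i => fcoef n f {i} with hc
  have hpow : (0:ℝ) < 2 ^ n := by positivity
  have hsumf : ∑ x : Fin n → Bool, f x = 2 ^ n * a := by
    rw [ha, bexp]; field_simp
  have hsumfc : ∀ i, ∑ x : Fin n → Bool, f x * sgn (x i) = 2 ^ n * c i := by
    intro i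
    rw [hc]; simp only [fcoef, bexp, Finset.prod_singleton]; field_simp
  have hfx : ∀ x, f x * f x = f x := by
    intro x; rcases hf x with h | h <;> simp [h]
  have key : ∑ x : Fin n → Bool, (f x - a - ∑ i : Fin n, c i * sgn (x i)) ^ 2
      = 2 ^ n * (a - a ^ 2 - ∑ i : Fin n, (c i) ^ 2) := by
    have expand : ∀ x : Fin n → Bool,
        (f x - a - ∑ i : Fin n, c i * sgn (x i)) ^ 2
        = f x * f x + a ^ 2 - 2 * a * f x
          + (∑ i : Fin n, ∑ j : Fin n, (c i * c j) * (sgn (x i) * sgn (x j)))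
          - 2 * (∑ i : Fin n, c i * (f x * sgn (x i)))
          + 2 * a * (∑ i : Fin n, c i * sgn (x i)) := by
      intro x
      have hLL : (∑ i : Fin n, ∑ j : Fin n, (c i * c j) * (sgn (x i) * sgn (x j)))
          = (∑ i : Fin n, c i * sgn (x i)) * (∑ j : Fin n, c j * sgn (x j)) := by
        rw [Finset.sum_mul_sum]
        exact Finset.sum_congr rfl fun i _ => Finset.sum_congr rfl fun j _ => by ring
      have hfL : f x * (∑ i : Fin n, c i * sgn (x i))
          = ∑ i : Fin n, c i * (f x * sgn (x i)) := by
        rw [Finset.mul_sum]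
        exact Finset.sum_congr rfl fun i _ => by ring
      rw [hLL, ← hfL]
      ring
    simp_rw [expand]
    rw [Finset.sum_add_distrib, Finset.sum_sub_distrib, Finset.sum_add_distrib,
      Finset.sum_sub_distrib, Finset.sum_add_distrib]
    have h1 : ∑ _x : Fin n → Bool, a ^ 2 = 2 ^ n * a ^ 2 := by
      rw [Finset.sum_const, nsmul_eq_mul, ← card_pi n]; simp
    have h2 : ∑ x : Fin n → Bool, 2 * a * f x = 2 ^ n * (2 * a * a) := by
      rw [← Finset.mul_sum, hsumf]; ring
    have h3 : ∑ x : Fin n → Bool, (∑ i : Fin n, ∑ j : Fin n,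
        (c i * c j) * (sgn (x i) * sgn (x j))) = 2 ^ n * ∑ i : Fin n, (c i) ^ 2 := by
      rw [Finset.sum_comm]
      have : ∀ i : Fin n, ∑ x : Fin n → Bool, ∑ j : Fin n,
          (c i * c j) * (sgn (x i) * sgn (x j)) = 2 ^ n * (c i) ^ 2 := by
        intro i
        rw [Finset.sum_comm]
        have : ∀ j : Fin n, ∑ x : Fin n → Bool, (c i * c j) * (sgn (x i) * sgn (x j))
            = if i = j then 2 ^ n * (c i) ^ 2 else 0 := by
          intro j
          rw [← Finset.mul_sum, sum_sgn_mul]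
          rcases eq_or_ne i j with rfl | hij
          · simp [sq]; ring
          · simp [hij]
        simp_rw [this]
        simp
      simp_rw [this]
      rw [← Finset.mul_sum]
    have h4 : ∑ x : Fin n → Bool, 2 * (∑ i : Fin n, c i * (f x * sgn (x i)))
        = 2 ^ n * (2 * ∑ i : Fin n, (c i) ^ 2) := by
      rw [← Finset.mul_sum, Finset.sum_comm]
      have : ∀ i : Fin n, ∑ x : Fin n → Bool, c i * (f x * sgn (x i))
          = 2 ^ n * (c i) ^ 2 := by
        intro i
        rw [← Finset.mul_sum, hsumfc i, sq]; ring
      rw [Finset.sum_congr rfl fun i _ => this i, ← Finset.mul_sum]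
      ring
    have h5 : ∑ x : Fin n → Bool, 2 * a * (∑ i : Fin n, c i * sgn (x i)) = 0 := by
      rw [← Finset.mul_sum, Finset.sum_comm]
      have : ∀ i : Fin n, ∑ x : Fin n → Bool, c i * sgn (x i) = 0 := by
        intro i; rw [← Finset.mul_sum, sum_sgn]; ring
      rw [Finset.sum_congr rfl fun i _ => this i]
      simp
    simp_rw [hfx]
    rw [hsumf, h1, h2, h3, h4, h5]
    ring
  have hnn : 0 ≤ ∑ x : Fin n → Bool, (f x - a - ∑ i : Fin n, c i * sgn (x i)) ^ 2 :=
    Finset.sum_nonneg fun x _ => sq_nonneg _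
  rw [key] at hnn
  nlinarith [hpow]

lemma sum_split (m : ℕ) (g : (Fin (m + 1) → Bool) → ℝ) :
    ∑ x : Fin (m + 1) → Bool, g x
      = (∑ y : Fin m → Bool, g (Fin.cons true y))
        + ∑ y : Fin m → Bool, g (Fin.cons false y) := by
  rw [← Equiv.sum_comp (Fin.consEquiv (fun _ => Bool)) g, Fintype.sum_prod_type,
    Fintype.sum_bool]
  rfl

lemma bexp_split (m : ℕ) (g : (Fin (m + 1) → Bool) → ℝ) :
    bexp (m + 1) g
      = (bexp m (fun y => g (Fin.cons true y)) + bexp m (fun y => g (Fin.cons false y))) / 2 := by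
  simp only [bexp, sum_split m g]
  rw [pow_succ]
  ring

lemma fcoef_zero_split (m : ℕ) (g : (Fin (m + 1) → Bool) → ℝ) :
    fcoef (m + 1) g {0}
      = (bexp m (fun y => g (Fin.cons true y)) - bexp m (fun y => g (Fin.cons false y))) / 2 := by
  simp only [fcoef, Finset.prod_singleton]
  rw [bexp_split]
  simp [bexp, sgn, Finset.sum_neg_distrib]
  ring

lemma fcoef_succ_split (m : ℕ) (g : (Fin (m + 1) → Bool) → ℝ) (i : Fin m) :
    fcoef (m + 1) g {i.succ}
      = (fcoef m (fun y => g (Fin.cons true y)) {i}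
          + fcoef m (fun y => g (Fin.cons false y)) {i}) / 2 := by
  simp only [fcoef, Finset.prod_singleton]
  rw [bexp_split]
  simp [Fin.cons_succ]

lemma bexp_compl (m : ℕ) (g : (Fin m → Bool) → ℝ) :
    bexp m (fun y => 1 - g y) = 1 - bexp m g := by
  simp only [bexp, Finset.sum_sub_distrib, Finset.sum_const, nsmul_eq_mul, mul_one]
  have : ((Finset.univ : Finset (Fin m → Bool)).card : ℝ) = 2 ^ m := by
    rw [Finset.card_univ]; exact card_pi m
  rw [this]
  have hpow : (2:ℝ) ^ m ≠ 0 := by positivity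
  field_simp

lemma fcoef_compl (m : ℕ) (g : (Fin m → Bool) → ℝ) (i : Fin m) :
    fcoef m (fun y => 1 - g y) {i} = - fcoef m g {i} := by
  simp only [fcoef, Finset.prod_singleton, bexp, sub_mul, one_mul,
    Finset.sum_sub_distrib, sum_sgn]
  ring

lemma Wone_compl (m : ℕ) (g : (Fin m → Bool) → ℝ) :
    Wone m (fun y => 1 - g y) = Wone m g := by
  simp only [Wone]
  exact Finset.sum_congr rfl fun i _ => by rw [fcoef_compl]; ring

lemma Wone_le_quarter (m : ℕ) (g : (Fin m → Bool) → ℝ) (hg : ∀ x, g x = 0 ∨ g x = 1) :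
    Wone m g ≤ 1 / 4 := by
  have h := bessel m g hg
  have : bexp m g - (bexp m g) ^ 2 ≤ 1 / 4 := by nlinarith [sq_nonneg (bexp m g - 1/2)]
  calc Wone m g = ∑ i : Fin m, (fcoef m g {i}) ^ 2 := rfl
    _ ≤ _ := h
    _ ≤ 1 / 4 := this

/-- For Boolean `f` with mean `a`, `W₁[f] ≤ a − a²`; consequently, if `f` is balanced
and `β = |f̂_{1}|`, then `W₁[f] ≤ β² + W^{(n−1)}(1/2 − β)`. -/
theorem stmt14 (n : ℕ) (hn : 0 < n) (f : (Fin n → Bool) → ℝ) (a : ℝ)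
    (hf : ∀ x, f x = 0 ∨ f x = 1) (ha : bexp n f = a) :
    Wone n f ≤ a - a ^ 2 ∧
    (a = 1 / 2 → ∀ β : ℝ, β = |fcoef n f {⟨0, hn⟩}| →
      Wone n f ≤ β ^ 2 + Wmax (n - 1) (1 / 2 - β)) := by
  constructor
  · have h := bessel n f hf
    rw [ha] at h
    exact h
  · intro ha2 β hβ
    obtain ⟨m, rfl⟩ : ∃ m, n = m + 1 := ⟨n - 1, (Nat.succ_pred_eq_of_pos hn).symm⟩
    simp only [Nat.add_sub_cancel]
    set gt : (Fin m → Bool) → ℝ := fun y => f (Fin.cons true y) with hgt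
    set gf : (Fin m → Bool) → ℝ := fun y => f (Fin.cons false y) with hgf
    have hgtb : ∀ y, gt y = 0 ∨ gt y = 1 := fun y => hf _
    have hgfb : ∀ y, gf y = 0 ∨ gf y = 1 := fun y => hf _
    set s : ℝ := fcoef (m + 1) f {0} with hs
    have hzero : (⟨0, hn⟩ : Fin (m + 1)) = 0 := rfl
    have hβs : β = |s| := by rw [hβ, hzero]
    have hsplit : s = (bexp m gt - bexp m gf) / 2 := fcoef_zero_split m f
    have hmean : (bexp m gt + bexp m gf) / 2 = 1 / 2 := by
      rw [← bexp_split, ha, ha2]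
    -- Wone decomposition
    have hW : Wone (m + 1) f = s ^ 2
        + ∑ i : Fin m, ((fcoef m gt {i} + fcoef m gf {i}) / 2) ^ 2 := by
      rw [Wone, Fin.sum_univ_succ]
      congr 1
      exact Finset.sum_congr rfl fun i _ => by rw [fcoef_succ_split m f i]
    -- Convexity bound
    have hconv : ∑ i : Fin m, ((fcoef m gt {i} + fcoef m gf {i}) / 2) ^ 2
        ≤ max (Wone m gt) (Wone m gf) := by
      have h1 : ∑ i : Fin m, ((fcoef m gt {i} + fcoef m gf {i}) / 2) ^ 2
          ≤ (Wone m gt + Wone m gf) / 2 := by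
        rw [Wone, Wone, ← Finset.sum_add_distrib, Finset.sum_div]
        apply Finset.sum_le_sum
        intro i _
        nlinarith [sq_nonneg (fcoef m gt {i} - fcoef m gf {i})]
      rcases le_total (Wone m gt) (Wone m gf) with h | h
      · rw [max_eq_right h]; linarith
      · rw [max_eq_left h]; linarith
    -- the candidate set
    set W : Set ℝ := {w | ∃ g : (Fin m → Bool) → ℝ,
      (∀ x, g x = 0 ∨ g x = 1) ∧ bexp m g = 1 / 2 - β ∧ w = Wone m g} with hWdef
    have hbdd : BddAbove W := by
      refine ⟨1 / 4, fun w hw => ?_⟩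
      obtain ⟨g, hg, _, rfl⟩ := hw
      exact Wone_le_quarter m g hg
    have hmem : ∀ g : (Fin m → Bool) → ℝ, (∀ y, g y = 0 ∨ g y = 1) →
        (bexp m g = 1 / 2 - β ∨ bexp m g = 1 / 2 + β) → Wone m g ∈ W := by
      intro g hg hbg
      rcases hbg with h | h
      · exact ⟨g, hg, h, rfl⟩
      · refine ⟨fun y => 1 - g y, fun y => ?_, ?_, (Wone_compl m g).symm⟩
        · rcases hg y with h' | h' <;> simp [h']
        · rw [bexp_compl, h]; ring
    have hbt : bexp m gt = 1 / 2 + s := by linarith [hsplit, hmean]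
    have hbf : bexp m gf = 1 / 2 - s := by linarith [hsplit, hmean]
    have hmemt : Wone m gt ∈ W := by
      apply hmem gt hgtb
      rcases abs_cases s with ⟨h1, _⟩ | ⟨h1, _⟩
      · right; rw [hbt, hβs, h1]
      · left; rw [hbt, hβs, h1]; ring
    have hmemf : Wone m gf ∈ W := by
      apply hmem gf hgfb
      rcases abs_cases s with ⟨h1, _⟩ | ⟨h1, _⟩
      · left; rw [hbf, hβs, h1]
      · right; rw [hbf, hβs, h1]; ring
    have hsup : max (Wone m gt) (Wone m gf) ≤ Wmax m (1 / 2 - β) := by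
      rcases le_total (Wone m gt) (Wone m gf) with h | h
      · rw [max_eq_right h]; exact le_csSup hbdd hmemf
      · rw [max_eq_left h]; exact le_csSup hbdd hmemt
    have hβ2 : s ^ 2 = β ^ 2 := by rw [hβs, sq_abs]
    rw [hW, ← hβ2]
    linarith
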